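/- arXiv:1006.4750 — 2 statements merged into one kernel-verified Lean document; each statement's English description precedes it below -/
import Mathlib

section
/- Let H be a random variable on [0, ∞) with distribution function F(r) = 1 - exp(-λ(c·r + π·r²)) for r ≥ 0, where λ > 0 and c ≥ 0. Then E H = ∫_0^∞ r·λ·(c + 2πr)·e^{-λ(cr + πr²)} dr = e^{c²λ/(4π)} · λ^{-1/2} · ∫_{c√(λ/(2π))}^∞ (2π)^{-1/2} e^{-t²/2} dt, i.e. E H = exp(c²λ/(4π)) · λ^{-1/2} · (1 - Φ(c√(λ/(2π)))), where Φ is the standard normal distribution function. -/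
open Real MeasureTheory Set Filter

lemma integral_comp_add_right_Ioi (g : ℝ → ℝ) (a d : ℝ) :
    ∫ x in Set.Ioi a, g (x + d) = ∫ x in Set.Ioi (a + d), g x := by
  rw [← integral_indicator measurableSet_Ioi, ← integral_indicator measurableSet_Ioi,
    ← integral_add_right_eq_self ((Set.Ioi (a + d)).indicator g) d]
  congr 1
  ext x
  by_cases h : a < x
  · simp [Set.indicator_of_mem, h, add_lt_add_iff_right]
  · have h' : ¬ (a + d < x + d) := by simpa [add_lt_add_iff_right] using h
    simp [Set.indicator_of_notMem, h, h']

set_option maxHeartbeats 1000000 in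
/-- First moment of the pore radius:
`∫_0^∞ r·λ(c + 2πr)e^{-λ(cr + πr²)} dr
   = e^{c²λ/(4π)}·λ^{-1/2}·∫_{c√(λ/(2π))}^∞ (2π)^{-1/2} e^{-t²/2} dt`. -/
theorem pore_radius_expectation (lam c : ℝ) (hl : 0 < lam) (hc : 0 ≤ c) :
    ∫ r in Set.Ioi (0 : ℝ),
        r * (lam * (c + 2 * π * r) * Real.exp (-(lam * (c * r + π * r ^ 2))))
      = Real.exp (c ^ 2 * lam / (4 * π)) * (1 / Real.sqrt lam)
          * ∫ t in Set.Ioi (c * Real.sqrt (lam / (2 * π))),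
              (Real.sqrt (2 * π))⁻¹ * Real.exp (-t ^ 2 / 2) := by
  have hpi : (0:ℝ) < π := pi_pos
  set G : ℝ → ℝ := fun r => Real.exp (-(lam * (c * r + π * r ^ 2))) with hG
  have hGcont : Continuous G := by fun_prop
  have hGint : IntegrableOn G (Set.Ioi (0:ℝ)) := by
    apply Integrable.mono' ((integrable_exp_neg_mul_sq (mul_pos hl hpi)).integrableOn
      (s := Set.Ioi (0:ℝ)))
    · exact hGcont.aestronglyMeasurable.restrict
    · filter_upwards [ae_restrict_mem measurableSet_Ioi] with x hx
      rw [Real.norm_eq_abs, abs_of_pos (Real.exp_pos _)]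
      apply Real.exp_le_exp.2
      have hx0 : (0:ℝ) < x := hx
      nlinarith [mul_nonneg (mul_nonneg hl.le hc) hx0.le]
  have step1 : ∫ r in Set.Ioi (0 : ℝ),
      r * (lam * (c + 2 * π * r) * Real.exp (-(lam * (c * r + π * r ^ 2))))
      = ∫ r in Set.Ioi (0:ℝ), G r := by
    have key := integral_Ioi_of_hasDerivAt_of_nonneg'
      (g := fun r => -(r * G r) + ∫ t in (0:ℝ)..r, G t)
      (g' := fun r => r * (lam * (c + 2 * π * r) * Real.exp (-(lam * (c * r + π * r ^ 2)))))
      (a := 0) (l := ∫ r in Set.Ioi (0:ℝ), G r)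
      ?_ ?_ ?_
    · rw [key]; simp
    · intro x _
      have hu : HasDerivAt (fun r : ℝ => -(lam * (c * r + π * r ^ 2)))
          (-(lam * (c * 1 + π * (↑2 * x ^ 1)))) x := by
        have h1 : HasDerivAt (fun r : ℝ => c * r + π * r ^ 2)
            (c * 1 + π * (↑2 * x ^ 1)) x :=
          ((hasDerivAt_id x).const_mul c).add ((hasDerivAt_pow 2 x).const_mul π)
        exact (h1.const_mul lam).neg
      have hrG : HasDerivAt (fun r => r * G r)
          (1 * G x + x * (Real.exp (-(lam * (c * x + π * x ^ 2)))
            * (-(lam * (c * 1 + π * (↑2 * x ^ 1)))))) x :=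
        (hasDerivAt_id x).mul hu.exp
      have hint : HasDerivAt (fun r => ∫ t in (0:ℝ)..r, G t) (G x) x :=
        intervalIntegral.integral_hasDerivAt_right (hGcont.intervalIntegrable 0 x)
          (hGcont.stronglyMeasurable.stronglyMeasurableAtFilter)
          hGcont.continuousAt
      have := hrG.neg.add hint
      refine this.congr_deriv ?_
      ring
    · intro x hx
      have hx0 : (0:ℝ) < x := hx
      have h2 : (0:ℝ) ≤ c + 2 * π * x := by positivity
      positivity
    · have h1 : Tendsto (fun r : ℝ => -(r * G r)) atTop (nhds 0) := by
        rw [← neg_zero]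
        apply Tendsto.neg
        have hb : (0:ℝ) < lam * π := mul_pos hl hpi
        have ho := rpow_mul_exp_neg_mul_sq_isLittleO_exp_neg hb (1:ℝ)
        have hbot : Tendsto (fun x : ℝ => (-(1/2) : ℝ) * x) atTop atBot :=
          Tendsto.const_mul_atTop_of_neg (by norm_num) tendsto_id
        have hlim : Tendsto (fun x : ℝ => Real.exp (-(1/2) * x)) atTop (nhds 0) :=
          Real.tendsto_exp_atBot.comp hbot
        have h2 : Tendsto (fun x : ℝ => x ^ (1:ℝ) * Real.exp (-(lam*π) * x ^ 2)) atTop (nhds 0) :=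
          ho.isBigO.trans_tendsto hlim
        apply squeeze_zero_norm' _ h2
        filter_upwards [eventually_ge_atTop (0:ℝ)] with x hx0
        rw [Real.norm_eq_abs, abs_of_nonneg (by positivity), Real.rpow_one]
        have hle : G x ≤ Real.exp (-(lam*π) * x ^ 2) := by
          apply Real.exp_le_exp.2
          nlinarith [mul_nonneg (mul_nonneg hl.le hc) hx0]
        exact mul_le_mul_of_nonneg_left hle hx0
      have h2 : Tendsto (fun r : ℝ => ∫ t in (0:ℝ)..r, G t) atTop
          (nhds (∫ r in Set.Ioi (0:ℝ), G r)) :=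
        intervalIntegral_tendsto_integral_Ioi 0 hGint tendsto_id
      simpa using h1.add h2
  rw [step1]
  -- step 2
  have hb : (0:ℝ) < Real.sqrt (2 * lam * π) := Real.sqrt_pos.2 (by positivity)
  have hsq : Real.sqrt (2 * lam * π) ^ 2 = 2 * lam * π := Real.sq_sqrt (by positivity)
  have hcs : c * Real.sqrt (lam / (2 * π)) = Real.sqrt (2 * lam * π) * (c / (2 * π)) := by
    have h1 : Real.sqrt (lam / (2 * π)) = Real.sqrt (2 * lam * π) / (2 * π) := by
      rw [show lam / (2 * π) = (2 * lam * π) / (2 * π) ^ 2 by field_simp,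
        Real.sqrt_div (by positivity), Real.sqrt_sq (by positivity)]
    rw [h1]; ring
  set f : ℝ → ℝ := fun t => Real.exp (-t ^ 2 / 2) with hf
  have key : ∀ r : ℝ, G r = Real.exp (c ^ 2 * lam / (4 * π)) *
      f (Real.sqrt (2*lam*π) * r + c * Real.sqrt (lam / (2*π))) := by
    intro r
    rw [hG, hf]
    simp only
    rw [← Real.exp_add]
    congr 1
    rw [hcs, ← mul_add, mul_pow, hsq]
    field_simp
    ring
  have m := c * Real.sqrt (lam / (2*π))
  calc ∫ r in Set.Ioi (0:ℝ), G r
      = ∫ r in Set.Ioi (0:ℝ), Real.exp (c ^ 2 * lam / (4 * π)) *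
          f (Real.sqrt (2*lam*π) * r + c * Real.sqrt (lam / (2*π))) :=
        setIntegral_congr_fun measurableSet_Ioi (fun r _ => key r)
    _ = Real.exp (c ^ 2 * lam / (4 * π)) * ∫ r in Set.Ioi (0:ℝ),
          (fun x => f (x + c * Real.sqrt (lam / (2*π)))) (Real.sqrt (2*lam*π) * r) := by
        rw [integral_const_mul]
    _ = Real.exp (c ^ 2 * lam / (4 * π)) * ((Real.sqrt (2*lam*π))⁻¹ •
          ∫ x in Set.Ioi (Real.sqrt (2*lam*π) * 0),
            (fun x => f (x + c * Real.sqrt (lam / (2*π)))) x) := by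
        rw [integral_comp_mul_left_Ioi (fun x => f (x + c * Real.sqrt (lam / (2*π)))) 0 hb]
    _ = Real.exp (c ^ 2 * lam / (4 * π)) * (Real.sqrt (2*lam*π))⁻¹ *
          ∫ t in Set.Ioi (Real.sqrt (2*lam*π) * 0 + c * Real.sqrt (lam / (2*π))), f t := by
        rw [integral_comp_add_right_Ioi f]
        simp [smul_eq_mul, mul_assoc]
    _ = Real.exp (c ^ 2 * lam / (4 * π)) * (1 / Real.sqrt lam)
          * ∫ t in Set.Ioi (c * Real.sqrt (lam / (2 * π))),
              (Real.sqrt (2 * π))⁻¹ * Real.exp (-t ^ 2 / 2) := by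
        rw [integral_const_mul, mul_zero, zero_add, hf]
        rw [show (2:ℝ) * lam * π = lam * (2 * π) by ring, Real.sqrt_mul hl.le]
        rw [mul_inv]
        ring
end

section
/- Let λ > 0, c ≥ 0. Then ∫_0^∞ r²·λ·(c + 2πr)·e^{-λ(cr + πr²)} dr = 1/(πλ) - e^{c²λ/(4π)}·(c/(π√λ))·(1 - Φ(c·√(λ/(2π)))), where Φ is the standard normal CDF. -/
/-!
Write `q r = λπ r² + λc r`, so that the density is `q' e^{-q}`. Integrating by parts, the
second moment is `∫ 2r e^{-q}`; since `2λπ r = q' - λc` and `∫_0^∞ q' e^{-q} = 1`, this equals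
`(1 - λc ∫_0^∞ e^{-q}) / (λπ)`. Completing the square turns `∫_0^∞ e^{-q}` into
`e^{c²λ/(4π)} ∫_{c/(2π)}^∞ e^{-λπ u²} du`, a rescaled tail of the standard normal
distribution.
-/

open Real MeasureTheory Set Filter Topology ProbabilityTheory

lemma integral_comp_add_right_Ioi_s9 {E : Type*} [NormedAddCommGroup E] [NormedSpace ℝ E]
    (f : ℝ → E) (s a : ℝ) :
    ∫ x in Ioi s, f (x + a) = ∫ x in Ioi (s + a), f x := by
  simpa [preimage_add_const_Ioi] using
    (measurePreserving_add_right volume a).setIntegral_preimage_emb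
      (measurableEmbedding_addRight a) f (Ioi (s + a))

lemma one_sub_integral_Iic_gaussianPDFReal (μ : ℝ) {v : NNReal} (hv : v ≠ 0) (y : ℝ) :
    1 - ∫ t in Iic y, gaussianPDFReal μ v t = ∫ t in Ioi y, gaussianPDFReal μ v t := by
  rw [← integral_gaussianPDFReal_eq_one μ hv, ← intervalIntegral.integral_Iic_add_Ioi
    (integrable_gaussianPDFReal μ v).integrableOn (integrable_gaussianPDFReal μ v).integrableOn]
  ring

lemma integral_Ioi_exp_neg_mul_sq {b : ℝ} (hb : 0 < b) (x : ℝ) :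
    ∫ u in Ioi x, exp (-b * u ^ 2)
      = √(π / b) * ∫ t in Ioi (√(2 * b) * x), gaussianPDFReal 0 1 t := by
  have hs : 0 < √(2 * b) := by positivity
  have hpdf : ∀ u, exp (-b * u ^ 2) = √(2 * π) * gaussianPDFReal 0 1 (√(2 * b) * u) := by
    intro u
    have h2π : 0 < √(2 * π) := by positivity
    rw [gaussianPDFReal, NNReal.coe_one, mul_one, sub_zero, mul_pow, sq_sqrt (by positivity),
      mul_inv_cancel_left₀ h2π.ne']
    ring_nf
  simp_rw [hpdf]
  rw [integral_const_mul, integral_comp_mul_left_Ioi (gaussianPDFReal 0 1) x hs, smul_eq_mul,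
    ← mul_assoc, sqrt_div' _ hb.le, sqrt_mul' _ hb.le, sqrt_mul' _ pi_pos.le]
  field_simp

section NegQuadraticExponent

variable {b k : ℝ}

lemma exp_neg_quadratic_le (hk : 0 ≤ k) {r : ℝ} (hr : 0 ≤ r) :
    exp (-(b * r ^ 2 + k * r)) ≤ exp (-b * r ^ 2) :=
  exp_le_exp.2 (by nlinarith [mul_nonneg hk hr])

lemma integrableOn_Ioi_pow_mul_exp_neg_quadratic (hb : 0 < b) (hk : 0 ≤ k) (n : ℕ) :
    IntegrableOn (fun r ↦ r ^ n * exp (-(b * r ^ 2 + k * r))) (Ioi 0) := by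
  refine (integrableOn_rpow_mul_exp_neg_mul_sq hb (s := n)
    (neg_one_lt_zero.trans_le n.cast_nonneg)).mono' (by fun_prop) ?_
  filter_upwards [ae_restrict_mem measurableSet_Ioi] with r (hr : 0 < r)
  rw [norm_of_nonneg (by positivity), rpow_natCast]
  exact mul_le_mul_of_nonneg_left (exp_neg_quadratic_le hk hr.le) (by positivity)

lemma tendsto_sq_mul_exp_neg_quadratic_atTop (hb : 0 < b) (hk : 0 ≤ k) :
    Tendsto (fun r ↦ r ^ 2 * exp (-(b * r ^ 2 + k * r))) atTop (𝓝 0) := by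
  have hgauss : Tendsto (fun r : ℝ ↦ |r| ^ (2 : ℝ) * exp (-b * r ^ 2)) atTop (𝓝 0) :=
    (tendsto_rpow_abs_mul_exp_neg_mul_sq_cocompact hb 2).mono_left atTop_le_cocompact
  refine squeeze_zero' ?_ ?_ hgauss
  · filter_upwards with r
    positivity
  · filter_upwards [eventually_ge_atTop 0] with r hr
    rw [abs_of_nonneg hr, rpow_two]
    exact mul_le_mul_of_nonneg_left (exp_neg_quadratic_le hk hr) (by positivity)

lemma hasDerivAt_neg_exp_neg_quadratic (r : ℝ) :
    HasDerivAt (fun r ↦ -exp (-(b * r ^ 2 + k * r)))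
      ((2 * b * r + k) * exp (-(b * r ^ 2 + k * r))) r := by
  have hq := ((hasDerivAt_pow 2 r).const_mul b).add ((hasDerivAt_id r).const_mul k)
  exact hq.neg.exp.neg.congr_deriv (by norm_num; ring)

lemma integral_Ioi_deriv_mul_exp_neg_quadratic (hb : 0 < b) (hk : 0 ≤ k) :
    ∫ r in Ioi 0, (2 * b * r + k) * exp (-(b * r ^ 2 + k * r)) = 1 := by
  have hlim : Tendsto (fun r ↦ -exp (-(b * r ^ 2 + k * r))) atTop (𝓝 (-0)) := by
    refine (tendsto_exp_atBot.comp (tendsto_neg_atTop_atBot.comp ?_)).neg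
    refine tendsto_atTop_mono' _ ?_ ((tendsto_pow_atTop two_ne_zero).const_mul_atTop hb)
    filter_upwards [eventually_ge_atTop 0] with r hr
    nlinarith [mul_nonneg hk hr]
  simpa using integral_Ioi_of_hasDerivAt_of_nonneg'
    (fun r _ ↦ hasDerivAt_neg_exp_neg_quadratic r) (fun r (hr : 0 < r) ↦ by positivity) hlim

lemma integral_Ioi_sq_mul_deriv_mul_exp_neg_quadratic (hb : 0 < b) (hk : 0 ≤ k) :
    ∫ r in Ioi 0, r ^ 2 * ((2 * b * r + k) * exp (-(b * r ^ 2 + k * r)))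
      = ∫ r in Ioi 0, 2 * r * exp (-(b * r ^ 2 + k * r)) := by
  have hint : ∀ n, IntegrableOn (fun r ↦ r ^ n * exp (-(b * r ^ 2 + k * r))) (Ioi 0) :=
    integrableOn_Ioi_pow_mul_exp_neg_quadratic hb hk
  have huv' : IntegrableOn (fun r ↦ r ^ 2 * ((2 * b * r + k) * exp (-(b * r ^ 2 + k * r))))
      (Ioi 0) :=
    IntegrableOn.congr_fun (((hint 3).const_mul (2 * b)).add ((hint 2).const_mul k))
      (fun r _ ↦ by simp only [Pi.add_apply]; ring) measurableSet_Ioi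
  have hu'v : IntegrableOn (fun r ↦ 2 * r * -exp (-(b * r ^ 2 + k * r))) (Ioi 0) :=
    IntegrableOn.congr_fun ((hint 1).const_mul (-2)) (fun r _ ↦ by ring) measurableSet_Ioi
  have hzero : Tendsto (fun r ↦ r ^ 2 * -exp (-(b * r ^ 2 + k * r))) (𝓝[>] 0) (𝓝 0) := by
    have hcont : Continuous (fun r ↦ r ^ 2 * -exp (-(b * r ^ 2 + k * r))) := by fun_prop
    simpa using (hcont.tendsto 0).mono_left nhdsWithin_le_nhds
  have hinfty : Tendsto (fun r ↦ r ^ 2 * -exp (-(b * r ^ 2 + k * r))) atTop (𝓝 0) := by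
    simpa using (tendsto_sq_mul_exp_neg_quadratic_atTop hb hk).neg
  rw [integral_Ioi_mul_deriv_eq_deriv_mul (u' := fun r ↦ 2 * r)
    (fun r _ ↦ by simpa using hasDerivAt_pow 2 r)
    (fun r _ ↦ hasDerivAt_neg_exp_neg_quadratic r) huv' hu'v hzero hinfty]
  simp [integral_neg]

lemma integral_Ioi_exp_neg_quadratic (hb : b ≠ 0) :
    ∫ r in Ioi 0, exp (-(b * r ^ 2 + k * r))
      = exp (k ^ 2 / (4 * b)) * ∫ u in Ioi (k / (2 * b)), exp (-b * u ^ 2) := by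
  have hsquare : ∀ r, exp (-(b * r ^ 2 + k * r))
      = exp (k ^ 2 / (4 * b)) * exp (-b * (r + k / (2 * b)) ^ 2) := by
    intro r
    rw [← exp_add]
    congr 1
    field_simp
    ring
  simp_rw [hsquare]
  rw [integral_const_mul, integral_comp_add_right_Ioi_s9 (fun u ↦ exp (-b * u ^ 2)), zero_add]

lemma integral_Ioi_two_mul_exp_neg_quadratic (hb : 0 < b) (hk : 0 ≤ k) :
    ∫ r in Ioi 0, 2 * r * exp (-(b * r ^ 2 + k * r))
      = (1 - k * exp (k ^ 2 / (4 * b)) * ∫ u in Ioi (k / (2 * b)), exp (-b * u ^ 2)) / b := by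
  have hint : ∀ n, IntegrableOn (fun r ↦ r ^ n * exp (-(b * r ^ 2 + k * r))) (Ioi 0) :=
    integrableOn_Ioi_pow_mul_exp_neg_quadratic hb hk
  have hsplit : b * (∫ r in Ioi 0, 2 * r * exp (-(b * r ^ 2 + k * r)))
      + k * (∫ r in Ioi 0, exp (-(b * r ^ 2 + k * r))) = 1 := by
    rw [← integral_const_mul, ← integral_const_mul, ← integral_add
      (IntegrableOn.congr_fun ((hint 1).const_mul (2 * b)) (fun r _ ↦ by ring) measurableSet_Ioi)
      (IntegrableOn.congr_fun ((hint 0).const_mul k) (fun r _ ↦ by ring) measurableSet_Ioi),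
      ← integral_Ioi_deriv_mul_exp_neg_quadratic hb hk]
    congr 1 with r
    ring
  rw [mul_assoc k, ← integral_Ioi_exp_neg_quadratic hb.ne', eq_div_iff hb.ne']
  linarith

end NegQuadraticExponent

/-- Second moment of the pore radius:
`∫_0^∞ r²·λ(c + 2πr)e^{-λ(cr + πr²)} dr
  = 1/(πλ) - e^{c²λ/(4π)}·(c/(π√λ))·(1 - Φ(c√(λ/(2π))))`. -/
theorem pore_radius_second_moment (lam c : ℝ) (hl : 0 < lam) (hc : 0 ≤ c) :
    ∫ r in Set.Ioi (0 : ℝ),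
        r ^ 2 * (lam * (c + 2 * π * r) * Real.exp (-(lam * (c * r + π * r ^ 2))))
      = 1 / (π * lam)
        - Real.exp (c ^ 2 * lam / (4 * π)) * (c / (π * Real.sqrt lam))
          * (1 - ∫ t in Set.Iic (c * Real.sqrt (lam / (2 * π))),
                (Real.sqrt (2 * π))⁻¹ * Real.exp (-t ^ 2 / 2)) := by
  have hb : 0 < lam * π := by positivity
  have hk : 0 ≤ lam * c := by positivity
  have hintegrand : ∀ r : ℝ,
      r ^ 2 * (lam * (c + 2 * π * r) * exp (-(lam * (c * r + π * r ^ 2))))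
        = r ^ 2 * ((2 * (lam * π) * r + lam * c) * exp (-(lam * π * r ^ 2 + lam * c * r))) := by
    intro r
    ring_nf
  have hφ : (fun t ↦ (√(2 * π))⁻¹ * exp (-t ^ 2 / 2)) = gaussianPDFReal 0 1 := by
    ext t
    simp [gaussianPDFReal]
  have hthreshold : √(2 * (lam * π)) * (lam * c / (2 * (lam * π))) = c * √(lam / (2 * π)) := by
    rw [show lam / (2 * π) = 2 * (lam * π) / (2 * π) ^ 2 by field_simp,
      sqrt_div' _ (by positivity), sqrt_sq (by positivity)]
    field_simp
  have hexp : (lam * c) ^ 2 / (4 * (lam * π)) = c ^ 2 * lam / (4 * π) := by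
    field_simp
  have hsqrt : √(π / (lam * π)) = (√lam)⁻¹ := by
    rw [div_mul_cancel_right₀ pi_ne_zero, sqrt_inv]
  simp_rw [hintegrand]
  rw [integral_Ioi_sq_mul_deriv_mul_exp_neg_quadratic hb hk,
    integral_Ioi_two_mul_exp_neg_quadratic hb hk, integral_Ioi_exp_neg_mul_sq hb,
    hthreshold, hφ, one_sub_integral_Iic_gaussianPDFReal 0 one_ne_zero, hexp, hsqrt]
  field_simp
end
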